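/- (Exterior decay of the local inhomogeneous nonlinearity.) Let N ≥ 3, 0 < τ < 1, and 1 < q < 1 + (2 − 2τ)/(N−2); set B' := Nq − N + 2τ. Then there exists a constant C > 0 such that for every R ≥ 1 and every smooth compactly supported u : ℝ^N → ℂ, ∫_{|x| > R} |x|^{−2τ} |u(x)|^{2q} dx ≤ C R^{−2τ} ‖u‖^{2q − B' + 2τ} ‖∇u‖^{B' − 2τ}. -/

import Mathlib

open MeasureTheory
open scoped NNReal ENNReal
open Filter
set_option maxHeartbeats 1000000


noncomputable def gradNormSq {N : ℕ} (u : EuclideanSpace ℝ (Fin N) → ℂ)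
    (x : EuclideanSpace ℝ (Fin N)) : ℝ :=
  ∑ i, ‖fderiv ℝ u x (EuclideanSpace.single i 1)‖ ^ 2

/-- The `L²` norm. -/
noncomputable def l2norm {N : ℕ} (u : EuclideanSpace ℝ (Fin N) → ℂ) : ℝ :=
  (∫ x, ‖u x‖ ^ 2) ^ ((1 : ℝ) / 2)

lemma opNorm_sq_le_sum (N : ℕ) (L : EuclideanSpace ℝ (Fin N) →L[ℝ] ℂ) :
    ‖L‖ ^ 2 ≤ ∑ i, ‖L (EuclideanSpace.single i 1)‖ ^ 2 := by
  have hS : (0:ℝ) ≤ ∑ i, ‖L (EuclideanSpace.single i 1)‖ ^ 2 :=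
    Finset.sum_nonneg fun i _ => sq_nonneg _
  have h : ‖L‖ ≤ Real.sqrt (∑ i, ‖L (EuclideanSpace.single i 1)‖ ^ 2) := by
    refine L.opNorm_le_bound (Real.sqrt_nonneg _) fun x => ?_
    have hx : x = ∑ i, x i • EuclideanSpace.single i (1:ℝ) := by
      have := (EuclideanSpace.basisFun (Fin N) ℝ).sum_repr x
      simpa [EuclideanSpace.basisFun_apply, EuclideanSpace.basisFun_repr, eq_comm] using this.symm
    calc ‖L x‖ = ‖∑ i, x i • L (EuclideanSpace.single i 1)‖ := by
          conv_lhs => rw [hx]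
          simp [map_sum]
      _ ≤ ∑ i, ‖x i • L (EuclideanSpace.single i 1)‖ := norm_sum_le _ _
      _ = ∑ i, |x i| * ‖L (EuclideanSpace.single i 1)‖ := by
          simp [norm_smul]
      _ ≤ Real.sqrt (∑ i, (x i)^2) * Real.sqrt (∑ i, ‖L (EuclideanSpace.single i 1)‖ ^ 2) := by
          have h2 := Finset.sum_mul_sq_le_sq_mul_sq Finset.univ
            (fun i => |x i|) (fun i => ‖L (EuclideanSpace.single i 1)‖)
          have h3 : ∑ i, (x i)^2 = ∑ i, |x i|^2 := by simp [sq_abs]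
          rw [h3, ← Real.sqrt_mul (Finset.sum_nonneg fun i _ => sq_nonneg _)]
          exact Real.le_sqrt_of_sq_le h2
      _ = Real.sqrt (∑ i, ‖L (EuclideanSpace.single i 1)‖ ^ 2) * ‖x‖ := by
          rw [EuclideanSpace.norm_eq, mul_comm]
          congr 1
          refine congrArg _ (Finset.sum_congr rfl fun i _ => ?_)
          rw [Real.norm_eq_abs, sq_abs]
  calc ‖L‖ ^ 2 ≤ Real.sqrt (∑ i, ‖L (EuclideanSpace.single i 1)‖ ^ 2) ^ 2 :=
        pow_le_pow_left₀ (norm_nonneg _) h 2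
    _ = _ := Real.sq_sqrt hS

lemma lint_eq_ofReal {α} [MeasurableSpace α] {μ : Measure α} {F : Type*} [NormedAddCommGroup F]
    (v : α → F) (r : ℝ) (hr : 0 ≤ r)
    (hint : Integrable (fun x => ‖v x‖ ^ r) μ) :
    ∫⁻ x, (‖v x‖₊ : ℝ≥0∞) ^ r ∂μ = ENNReal.ofReal (∫ x, ‖v x‖ ^ r ∂μ) := by
  rw [ofReal_integral_eq_lintegral_ofReal hint
    (Eventually.of_forall fun x => Real.rpow_nonneg (norm_nonneg _) _)]
  refine lintegral_congr fun x => ?_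
  rw [← ENNReal.ofReal_rpow_of_nonneg (norm_nonneg _) hr]
  congr 1
  rw [ENNReal.ofReal, Real.toNNReal_of_nonneg (norm_nonneg _)]
  rfl

/-- **Exterior decay of the local inhomogeneous nonlinearity.** -/
theorem exterior_decay_local (N : ℕ) (hN : 3 ≤ N) (τ q B' : ℝ)
    (hτ0 : 0 < τ) (hτ1 : τ < 1)
    (hq1 : 1 < q) (hq2 : q < 1 + (2 - 2 * τ) / ((N : ℝ) - 2))
    (hB : B' = N * q - N + 2 * τ) :
    ∃ C > 0, ∀ R : ℝ, 1 ≤ R → ∀ u : EuclideanSpace ℝ (Fin N) → ℂ,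
      ContDiff ℝ (⊤ : ℕ∞) u → HasCompactSupport u →
      (∫ x in {x : EuclideanSpace ℝ (Fin N) | R < ‖x‖},
          ‖x‖ ^ (-(2 * τ)) * ‖u x‖ ^ (2 * q)) ≤
        C * R ^ (-(2 * τ)) * l2norm u ^ (2 * q - B' + 2 * τ) *
          (∫ x, gradNormSq u x) ^ ((B' - 2 * τ) / 2) := by
  have hN3 : (3:ℝ) ≤ N := by exact_mod_cast hN
  have hN2 : (0:ℝ) < (N:ℝ) - 2 := by linarith
  set p'r : ℝ := 2*N/((N:ℝ)-2) with hp'r_def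
  have hp'r_pos : 0 < p'r := by positivity
  set s : ℝ := (q-1)*((N:ℝ)-2)/2 with hs_def
  have hs0 : 0 < s := by
    apply div_pos (mul_pos (by linarith) hN2) two_pos
  have hs1 : s < 1 := by
    rw [hs_def, div_lt_one two_pos]
    have h1 : q - 1 < (2 - 2*τ)/((N:ℝ)-2) := by linarith
    calc (q-1)*((N:ℝ)-2) < ((2-2*τ)/((N:ℝ)-2))*((N:ℝ)-2) := by
          exact mul_lt_mul_of_pos_right h1 hN2
      _ = 2 - 2*τ := by field_simp
      _ < 2 := by linarith
  have h1s : 0 < 1 - s := by linarith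
  -- key identities
  have id1 : 2*(1-s) + p'r*s = 2*q := by
    rw [hs_def, hp'r_def]; field_simp; ring
  have id2 : 2*(1-s) = 2*q - B' + 2*τ := by
    rw [hs_def, hB]; field_simp; ring
  have id3 : p'r*s = B' - 2*τ := by
    rw [hs_def, hp'r_def, hB]; field_simp; ring
  have hp'nn : (0:ℝ) ≤ p'r := hp'r_pos.le
  set p' : ℝ≥0 := ⟨p'r, hp'nn⟩ with hp'def
  have hp'0 : p' ≠ 0 := by
    intro h
    rw [← NNReal.coe_eq_zero] at h
    exact hp'r_pos.ne' h
  set C₀ : ℝ≥0 := SNormLESNormFDerivOfEqConst ℂ (volume : Measure (EuclideanSpace ℝ (Fin N))) 2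
    with hC₀def
  set C : ℝ := ((C₀:ℝ)+1) ^ (p'r * s) with hCdef
  have hC0 : 0 < C := Real.rpow_pos_of_pos (by positivity) _
  refine ⟨C, hC0, fun R hR u hu h2u => ?_⟩
  have hu1 : ContDiff ℝ 1 u := hu.of_le (by simp)
  have hcont : Continuous u := hu.continuous
  -- integrability facts
  have hnorm_rpow_cont : ∀ r : ℝ, 0 < r → Continuous (fun x => ‖u x‖ ^ r) := fun r hr =>
    hcont.norm.rpow_const fun x => Or.inr hr.le
  have hnorm_rpow_supp : ∀ r : ℝ, r ≠ 0 → HasCompactSupport (fun x => ‖u x‖ ^ r) := fun r hr =>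
    h2u.norm.rpow_const hr
  have hint_rpow : ∀ r : ℝ, 0 < r →
      Integrable (fun x => ‖u x‖ ^ r) (volume : Measure (EuclideanSpace ℝ (Fin N))) :=
    fun r hr => (hnorm_rpow_cont r hr).integrable_of_hasCompactSupport (hnorm_rpow_supp r hr.ne')
  have hfd_cont : Continuous (fderiv ℝ u) := hu.continuous_fderiv (by simp)
  have hfd_supp : HasCompactSupport (fderiv ℝ u) := h2u.fderiv (𝕜 := ℝ)
  have hfd2_cont : Continuous (fun x => ‖fderiv ℝ u x‖ ^ (2:ℝ)) :=
    hfd_cont.norm.rpow_const fun x => Or.inr (by norm_num)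
  have hfd2_supp : HasCompactSupport (fun x => ‖fderiv ℝ u x‖ ^ (2:ℝ)) :=
    hfd_supp.norm.rpow_const two_ne_zero
  have hintY : Integrable (fun x => ‖fderiv ℝ u x‖ ^ (2:ℝ))
      (volume : Measure (EuclideanSpace ℝ (Fin N))) :=
    hfd2_cont.integrable_of_hasCompactSupport hfd2_supp
  have hgrad_cont : Continuous (gradNormSq u) := by
    unfold gradNormSq
    exact continuous_finset_sum _ fun i _ =>
      ((hfd_cont.clm_apply continuous_const).norm.pow 2)
  have hgrad_supp : HasCompactSupport (gradNormSq u) := by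
    have : gradNormSq u =
        (fun L : EuclideanSpace ℝ (Fin N) →L[ℝ] ℂ =>
          ∑ i, ‖L (EuclideanSpace.single i 1)‖ ^ 2) ∘ fderiv ℝ u := rfl
    rw [this]
    exact hfd_supp.comp_left (by simp)
  have hintG : Integrable (gradNormSq u) (volume : Measure (EuclideanSpace ℝ (Fin N))) :=
    hgrad_cont.integrable_of_hasCompactSupport hgrad_supp
  -- quantities
  set J : ℝ := ∫ x, ‖u x‖ ^ (2*q) with hJdef
  set A2 : ℝ := ∫ x : EuclideanSpace ℝ (Fin N), ‖u x‖ ^ (2:ℝ) with hA2def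
  set X : ℝ := ∫ x : EuclideanSpace ℝ (Fin N), ‖u x‖ ^ p'r with hXdef
  set Y : ℝ := ∫ x : EuclideanSpace ℝ (Fin N), ‖fderiv ℝ u x‖ ^ (2:ℝ) with hYdef
  set G : ℝ := ∫ x, gradNormSq u x with hGdef
  have hA20 : 0 ≤ A2 := integral_nonneg fun x => Real.rpow_nonneg (norm_nonneg _) _
  have hX0 : 0 ≤ X := integral_nonneg fun x => Real.rpow_nonneg (norm_nonneg _) _
  have hY0 : 0 ≤ Y := integral_nonneg fun x => Real.rpow_nonneg (norm_nonneg _) _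
  have hG0 : 0 ≤ G := integral_nonneg fun x => Finset.sum_nonneg fun i _ => sq_nonneg _
  have hR0 : (0:ℝ) < R := lt_of_lt_of_le one_pos hR
  have hRτ : (0:ℝ) ≤ R ^ (-(2*τ)) := Real.rpow_nonneg hR0.le _
  -- Step A
  have stepA : (∫ x in {x : EuclideanSpace ℝ (Fin N) | R < ‖x‖},
      ‖x‖ ^ (-(2 * τ)) * ‖u x‖ ^ (2 * q)) ≤ R ^ (-(2*τ)) * J := by
    set S : Set (EuclideanSpace ℝ (Fin N)) := {x | R < ‖x‖} with hSdef
    have hSmeas : MeasurableSet S :=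
      (isOpen_lt continuous_const continuous_norm).measurableSet
    have hintg : Integrable (fun x => R ^ (-(2*τ)) * ‖u x‖ ^ (2*q))
        (volume : Measure (EuclideanSpace ℝ (Fin N))) :=
      (hint_rpow (2*q) (by linarith)).const_mul _
    have hmeas_h : AEStronglyMeasurable
        (fun x : EuclideanSpace ℝ (Fin N) => ‖x‖ ^ (-(2 * τ)) * ‖u x‖ ^ (2 * q))
        (volume.restrict S) := by
      apply AEStronglyMeasurable.mul
      · exact (by fun_prop : Measurable fun x : EuclideanSpace ℝ (Fin N) => ‖x‖ ^ (-(2*τ))).aestronglyMeasurable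
      · exact ((hnorm_rpow_cont (2*q) (by linarith)).aestronglyMeasurable).restrict
    have hbound : ∀ x ∈ S, ‖x‖ ^ (-(2 * τ)) * ‖u x‖ ^ (2 * q) ≤
        R ^ (-(2*τ)) * ‖u x‖ ^ (2*q) := by
      intro x hx
      have hx' : R ≤ ‖x‖ := (le_of_lt hx)
      refine mul_le_mul_of_nonneg_right ?_ (Real.rpow_nonneg (norm_nonneg _) _)
      exact Real.rpow_le_rpow_of_nonpos hR0 hx' (by linarith)
    have hIntOn : IntegrableOn
        (fun x : EuclideanSpace ℝ (Fin N) => ‖x‖ ^ (-(2 * τ)) * ‖u x‖ ^ (2 * q)) S := by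
      refine Integrable.mono' hintg.integrableOn hmeas_h ?_
      filter_upwards [ae_restrict_mem hSmeas] with x hx
      rw [Real.norm_of_nonneg (mul_nonneg (Real.rpow_nonneg (norm_nonneg _) _)
        (Real.rpow_nonneg (norm_nonneg _) _))]
      exact hbound x hx
    calc (∫ x in S, ‖x‖ ^ (-(2 * τ)) * ‖u x‖ ^ (2 * q))
        ≤ ∫ x in S, R ^ (-(2*τ)) * ‖u x‖ ^ (2*q) :=
          setIntegral_mono_on hIntOn hintg.integrableOn hSmeas hbound
      _ ≤ ∫ x, R ^ (-(2*τ)) * ‖u x‖ ^ (2*q) :=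
          setIntegral_le_integral hintg (Eventually.of_forall fun x =>
            mul_nonneg hRτ (Real.rpow_nonneg (norm_nonneg _) _))
      _ = R ^ (-(2*τ)) * J := by rw [hJdef, integral_const_mul]
  -- Step B : Hölder
  have stepB : J ≤ A2 ^ (1-s) * X ^ s := by
    have hconj : Real.HolderConjugate (1/(1-s)) (1/s) := by
      constructor
      · rw [one_div, one_div, inv_inv, inv_inv]; ring
      · exact one_div_pos.mpr h1s
      · positivity
    have hf_mem : MemLp (fun x => ‖u x‖ ^ (2*(1-s))) (ENNReal.ofReal (1/(1-s)))
        (volume : Measure (EuclideanSpace ℝ (Fin N))) :=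
      (hnorm_rpow_cont _ (by nlinarith)).memLp_of_hasCompactSupport
        (hnorm_rpow_supp _ (by nlinarith))
    have hg_mem : MemLp (fun x => ‖u x‖ ^ (p'r*s)) (ENNReal.ofReal (1/s))
        (volume : Measure (EuclideanSpace ℝ (Fin N))) :=
      (hnorm_rpow_cont _ (by positivity)).memLp_of_hasCompactSupport
        (hnorm_rpow_supp _ (by positivity))
    have hH := integral_mul_le_Lp_mul_Lq_of_nonneg hconj
      (Eventually.of_forall fun x => Real.rpow_nonneg (norm_nonneg _) _)
      (Eventually.of_forall fun x => Real.rpow_nonneg (norm_nonneg _) _) hf_mem hg_mem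
    have e1 : ∀ x : EuclideanSpace ℝ (Fin N),
        ‖u x‖ ^ (2*(1-s)) * ‖u x‖ ^ (p'r*s) = ‖u x‖ ^ (2*q) := fun x => by
      rw [← Real.rpow_add_of_nonneg (norm_nonneg _) (by nlinarith) (by positivity), id1]
    have e2 : ∀ x : EuclideanSpace ℝ (Fin N),
        (‖u x‖ ^ (2*(1-s))) ^ (1/(1-s)) = ‖u x‖ ^ (2:ℝ) := fun x => by
      rw [← Real.rpow_mul (norm_nonneg _)]
      congr 1
      field_simp
    have e3 : ∀ x : EuclideanSpace ℝ (Fin N),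
        (‖u x‖ ^ (p'r*s)) ^ (1/s) = ‖u x‖ ^ p'r := fun x => by
      rw [← Real.rpow_mul (norm_nonneg _)]
      congr 1
      field_simp
    calc J = ∫ x, ‖u x‖ ^ (2*(1-s)) * ‖u x‖ ^ (p'r*s) := by
          rw [hJdef]; exact (integral_congr_ae (Eventually.of_forall e1)).symm
      _ ≤ (∫ x, (‖u x‖ ^ (2*(1-s))) ^ (1/(1-s))) ^ (1/(1/(1-s))) *
          (∫ x, (‖u x‖ ^ (p'r*s)) ^ (1/s)) ^ (1/(1/s)) := hH
      _ = A2 ^ (1-s) * X ^ s := by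
          rw [one_div_one_div, one_div_one_div]
          congr 2
          · exact integral_congr_ae (Eventually.of_forall e2)
          · exact integral_congr_ae (Eventually.of_forall e3)
  -- Step C : Sobolev
  have stepC : X ^ ((1:ℝ)/p'r) ≤ (C₀:ℝ) * Y ^ ((1:ℝ)/2) := by
    have hsob := eLpNorm_le_eLpNorm_fderiv_of_eq
      (volume : Measure (EuclideanSpace ℝ (Fin N))) hu1 h2u (p := 2) (p' := p')
      (by norm_num) (by simp [finrank_euclideanSpace_fin]; omega) ?_
    · rw [eLpNorm_nnreal_eq_lintegral hp'0, eLpNorm_nnreal_eq_lintegral (two_ne_zero)] at hsob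
      have hl1 : ∫⁻ x, (‖u x‖₊ : ℝ≥0∞) ^ (p' : ℝ)
          ∂(volume : Measure (EuclideanSpace ℝ (Fin N))) = ENNReal.ofReal X := by
        rw [hXdef]; exact lint_eq_ofReal u p'r hp'nn (hint_rpow p'r hp'r_pos)
      have hl2 : ∫⁻ x, (‖fderiv ℝ u x‖₊ : ℝ≥0∞) ^ ((2:ℝ≥0) : ℝ)
          ∂(volume : Measure (EuclideanSpace ℝ (Fin N))) = ENNReal.ofReal Y := by
        rw [hYdef]
        have : ((2:ℝ≥0) : ℝ) = (2:ℝ) := by norm_num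
        rw [this]
        exact lint_eq_ofReal (fderiv ℝ u) 2 (by norm_num) hintY
      simp only [enorm_eq_nnnorm] at hsob
      rw [hl1, hl2] at hsob
      have hfin : ((C₀ : ℝ≥0∞) * ENNReal.ofReal Y ^ (1/((2:ℝ≥0):ℝ))) ≠ ⊤ :=
        ENNReal.mul_ne_top ENNReal.coe_ne_top
          (ENNReal.rpow_ne_top_of_nonneg (by norm_num) ENNReal.ofReal_ne_top)
      have := ENNReal.toReal_mono hfin hsob
      rw [ENNReal.toReal_mul, ← ENNReal.toReal_rpow, ← ENNReal.toReal_rpow,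
        ENNReal.toReal_ofReal hX0, ENNReal.toReal_ofReal hY0, ENNReal.coe_toReal] at this
      have hc : ((2:ℝ≥0):ℝ) = (2:ℝ) := by norm_num
      rw [hc] at this
      exact_mod_cast this
    · rw [finrank_euclideanSpace_fin]
      have h1 : (p' : ℝ) = p'r := rfl
      rw [h1, hp'r_def, inv_div]
      push_cast
      field_simp
  -- Step D
  have stepD : Y ≤ G := by
    refine integral_mono hintY hintG fun x => ?_
    have h1 : ‖fderiv ℝ u x‖ ^ (2:ℝ) = ‖fderiv ℝ u x‖ ^ (2:ℕ) := by
      rw [show (2:ℝ) = ((2:ℕ):ℝ) by norm_num, Real.rpow_natCast]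
    rw [h1]
    exact opNorm_sq_le_sum N (fderiv ℝ u x)
  -- Combine X^s ≤ C * G^((B'-2τ)/2)
  have hXs : X ^ s ≤ C * G ^ ((B' - 2*τ)/2) := by
    have h1 : X ^ s = (X ^ ((1:ℝ)/p'r)) ^ (p'r * s) := by
      rw [← Real.rpow_mul hX0]
      congr 1
      field_simp
    rw [h1]
    calc (X ^ ((1:ℝ)/p'r)) ^ (p'r * s) ≤ ((C₀:ℝ) * Y ^ ((1:ℝ)/2)) ^ (p'r * s) :=
          Real.rpow_le_rpow (Real.rpow_nonneg hX0 _) stepC (by positivity)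
      _ = (C₀:ℝ) ^ (p'r*s) * (Y ^ ((1:ℝ)/2)) ^ (p'r*s) :=
          Real.mul_rpow (NNReal.coe_nonneg _) (Real.rpow_nonneg hY0 _)
      _ ≤ C * G ^ ((B' - 2*τ)/2) := by
          refine mul_le_mul ?_ ?_ (Real.rpow_nonneg (Real.rpow_nonneg hY0 _) _) hC0.le
          · exact Real.rpow_le_rpow (NNReal.coe_nonneg _) (by linarith) (by positivity)
          · rw [← Real.rpow_mul hY0]
            have : (1:ℝ)/2 * (p'r*s) = (B' - 2*τ)/2 := by rw [id3]; ring
            rw [this]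
            exact Real.rpow_le_rpow hY0 stepD (by rw [← id3]; positivity)
  -- l2norm relation
  have hl2A : l2norm u ^ (2*q - B' + 2*τ) = A2 ^ (1-s) := by
    have hA2' : (∫ x, ‖u x‖ ^ 2) = A2 := by
      rw [hA2def]
      refine integral_congr_ae (Eventually.of_forall fun x => ?_)
      show ‖u x‖ ^ (2:ℕ) = ‖u x‖ ^ (2:ℝ)
      rw [Real.rpow_two]
    rw [l2norm, hA2', ← Real.rpow_mul hA20, ← id2]
    congr 1
    ring
  -- conclude
  calc (∫ x in {x : EuclideanSpace ℝ (Fin N) | R < ‖x‖},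
        ‖x‖ ^ (-(2 * τ)) * ‖u x‖ ^ (2 * q)) ≤ R ^ (-(2*τ)) * J := stepA
    _ ≤ R ^ (-(2*τ)) * (A2 ^ (1-s) * X ^ s) := by
        refine mul_le_mul_of_nonneg_left stepB hRτ
    _ ≤ R ^ (-(2*τ)) * (A2 ^ (1-s) * (C * G ^ ((B' - 2*τ)/2))) := by
        refine mul_le_mul_of_nonneg_left
          (mul_le_mul_of_nonneg_left hXs (Real.rpow_nonneg hA20 _)) hRτ
    _ = C * R ^ (-(2 * τ)) * l2norm u ^ (2 * q - B' + 2 * τ) *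
          G ^ ((B' - 2 * τ) / 2) := by
        rw [hl2A]; ring
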